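/- arXiv:0801.3770 — 2 statements merged into one kernel-verified Lean document; each statement's English description precedes it below -/
import Mathlib

section
/- Let G be a finite group, A ⊴ G abelian normal, M a G-module with trivial A-action. Every cohomology class in the kernel of the restriction map res : H²(G,M) → H²(A,M) admits a representative cocycle f ∈ Z²(G,M) satisfying f(g₁,g₂) = f(g₁,g₂a) for all g₁,g₂ ∈ G and a ∈ A. -/
/-!
Choose a transversal `r` of the left cosets of `A`, and write `g = r b` with `b ∈ A`. If the
restriction of `f` to `A` is the coboundary of `c`, then `u g = r • (c b)⁻¹ * f r b` satisfies
`u (g a) = u g * g • (c a)⁻¹ * f g a` for `a ∈ A`; this uses that `A` acts trivially, so that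
`f b a = c a * (c (b a))⁻¹ * c b` and `g • m = r • m`. Multiplying `f` by the coboundary of `u`
then cancels the dependence on `a` in the second variable, by the cocycle identity for
`(g₁, g₂, a)`.
-/

namespace CrossedNormalized

variable {G M : Type*} [Group G] [CommGroup M] [MulDistribMulAction G M]

def IsTwoCocycle (f : G → G → M) : Prop :=
  ∀ g₁ g₂ g₃ : G, g₁ • f g₂ g₃ * f g₁ (g₂ * g₃) = f (g₁ * g₂) g₃ * f g₁ g₂

theorem IsTwoCocycle.eq_inv_mul {f : G → G → M} (hf : IsTwoCocycle f) (g₁ g₂ g₃ : G) :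
    f g₁ (g₂ * g₃) = (g₁ • f g₂ g₃)⁻¹ * (f (g₁ * g₂) g₃ * f g₁ g₂) :=
  eq_inv_mul_iff_mul_eq.mpr (hf g₁ g₂ g₃)

def mulCoboundary (f : G → G → M) (u : G → M) (g₁ g₂ : G) : M :=
  u g₁ * g₁ • u g₂ * f g₁ g₂ * (u (g₁ * g₂))⁻¹

theorem IsTwoCocycle.mulCoboundary {f : G → G → M} (hf : IsTwoCocycle f) (u : G → M) :
    IsTwoCocycle (mulCoboundary f u) := by
  intro g₁ g₂ g₃
  simp only [CrossedNormalized.mulCoboundary, hf.eq_inv_mul, smul_mul', smul_inv', mul_smul,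
    mul_assoc]
  apply Additive.ofMul.injective
  simp only [ofMul_mul, ofMul_inv]
  abel

theorem eq_mulCoboundary_mul_coboundary_inv (f : G → G → M) (u : G → M) (g₁ g₂ : G) :
    f g₁ g₂ = mulCoboundary f u g₁ g₂ * g₁ • (u g₂)⁻¹ * ((u (g₁ * g₂))⁻¹)⁻¹ * (u g₁)⁻¹ := by
  simp only [mulCoboundary, smul_inv', inv_inv]
  apply Additive.ofMul.injective
  simp only [ofMul_mul, ofMul_inv]
  abel

theorem mulCoboundary_mul_right {f : G → G → M} (hf : IsTwoCocycle f) {u : G → M} {a : G}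
    {m : M} (hu : ∀ g, u (g * a) = u g * g • m * f g a) (g₁ g₂ : G) :
    mulCoboundary f u g₁ (g₂ * a) = mulCoboundary f u g₁ g₂ := by
  simp only [mulCoboundary, ← mul_assoc g₁ g₂ a, hu, hf.eq_inv_mul, smul_mul', mul_smul]
  apply Additive.ofMul.injective
  simp only [ofMul_mul, ofMul_inv]
  abel

/-- The value at `r * b` of the correcting cochain, for the coset representative `r`. -/
def correction (f : G → G → M) (c : G → M) (r b : G) : M :=
  r • (c b)⁻¹ * f r b

section Restriction

variable {A : Subgroup G} (hAtriv : ∀ a ∈ A, ∀ m : M, a • m = m) {f : G → G → M} {c : G → M}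
  (hf : IsTwoCocycle f) (hc : ∀ a ∈ A, ∀ b ∈ A, f a b = a • c b * (c (a * b))⁻¹ * c a)
include hAtriv hf hc

theorem correction_mul_right (r : G) {a b : G} (hb : b ∈ A) (ha : a ∈ A) :
    correction f c r (b * a) = correction f c r b * (r * b) • (c a)⁻¹ * f (r * b) a := by
  have hfba : f b a = c a * (c (b * a))⁻¹ * c b := by rw [hc b hb a ha, hAtriv b hb]
  have hsmul : (r * b) • (c a)⁻¹ = r • (c a)⁻¹ := by rw [mul_smul, hAtriv b hb]
  simp only [correction, hf.eq_inv_mul, hfba, hsmul, smul_mul', smul_inv']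
  apply Additive.ofMul.injective
  simp only [ofMul_mul, ofMul_inv]
  abel

theorem exists_mul_right_eq :
    ∃ u : G → M, ∀ g, ∀ a ∈ A, u (g * a) = u g * g • (c a)⁻¹ * f g a := by
  let r : G → G := fun g => (g : G ⧸ A).out
  have hr_mem (g : G) : (r g)⁻¹ * g ∈ A := QuotientGroup.eq.mp (QuotientGroup.out_eq' _)
  have hr_mul (g : G) {a : G} (ha : a ∈ A) : r (g * a) = r g := by
    simp only [r, QuotientGroup.mk_mul_of_mem g ha]
  refine ⟨fun g => correction f c (r g) ((r g)⁻¹ * g), fun g a ha => ?_⟩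
  have key := correction_mul_right hAtriv hf hc (r g) (hr_mem g) ha
  rw [mul_inv_cancel_left] at key
  simpa only [hr_mul g ha, mul_assoc] using key

end Restriction

end CrossedNormalized

open CrossedNormalized in
theorem crossed_normalized_representative_general {G M : Type*} [Group G]
    [CommGroup M] [MulDistribMulAction G M] (A : Subgroup G)
    (hAtriv : ∀ a ∈ A, ∀ m : M, a • m = m)
    (f : G → G → M)
    (hcoc : ∀ g₁ g₂ g₃ : G, g₁ • f g₂ g₃ * f g₁ (g₂ * g₃) = f (g₁ * g₂) g₃ * f g₁ g₂)
    (hres : ∃ c : G → M, ∀ a ∈ A, ∀ b ∈ A, f a b = a • c b * (c (a * b))⁻¹ * c a) :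
    ∃ f' : G → G → M, ∃ c : G → M,
      (∀ g₁ g₂ g₃ : G, g₁ • f' g₂ g₃ * f' g₁ (g₂ * g₃) = f' (g₁ * g₂) g₃ * f' g₁ g₂) ∧
      (∀ g₁ g₂ : G, ∀ a ∈ A, f' g₁ (g₂ * a) = f' g₁ g₂) ∧
      (∀ g₁ g₂ : G, f g₁ g₂ = f' g₁ g₂ * (g₁ • c g₂) * (c (g₁ * g₂))⁻¹ * c g₁) := by
  obtain ⟨c, hc⟩ := hres
  obtain ⟨u, hu⟩ := exists_mul_right_eq hAtriv hcoc hc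
  exact ⟨mulCoboundary f u, fun g => (u g)⁻¹, IsTwoCocycle.mulCoboundary hcoc u,
    fun g₁ g₂ a ha => mulCoboundary_mul_right hcoc (hu · a ha) g₁ g₂,
    eq_mulCoboundary_mul_coboundary_inv f u⟩

/-- Every class in `ker(res : H²(G,M) → H²(A,M))` admits a
representative `f' ∈ Z²(G,M)` satisfying `f'(g₁,g₂) = f'(g₁,g₂a)` for all `a ∈ A`.
Here "the restriction of `f` to `A` is a coboundary" is expressed by a map
`c : G → M` with `f a b = a • c b * (c (a*b))⁻¹ * c a` for `a, b ∈ A`. -/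
theorem crossed_normalized_representative {G M : Type*} [Group G] [Fintype G]
    [CommGroup M] [MulDistribMulAction G M] (A : Subgroup G) (hAn : A.Normal)
    (hAab : ∀ a b : G, a ∈ A → b ∈ A → a * b = b * a)
    (hAtriv : ∀ a ∈ A, ∀ m : M, a • m = m)
    (f : G → G → M)
    (hcoc : ∀ g₁ g₂ g₃ : G, g₁ • f g₂ g₃ * f g₁ (g₂ * g₃) = f (g₁ * g₂) g₃ * f g₁ g₂)
    (hres : ∃ c : G → M, ∀ a ∈ A, ∀ b ∈ A, f a b = a • c b * (c (a * b))⁻¹ * c a) :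
    ∃ f' : G → G → M, ∃ c : G → M,
      (∀ g₁ g₂ g₃ : G, g₁ • f' g₂ g₃ * f' g₁ (g₂ * g₃) = f' (g₁ * g₂) g₃ * f' g₁ g₂) ∧
      (∀ g₁ g₂ : G, ∀ a ∈ A, f' g₁ (g₂ * a) = f' g₁ g₂) ∧
      (∀ g₁ g₂ : G, f g₁ g₂ = f' g₁ g₂ * (g₁ • c g₂) * (c (g₁ * g₂))⁻¹ * c g₁) :=
  crossed_normalized_representative_general A hAtriv f hcoc hres
end

section
/- Let K be a field and A a finite abelian group with |A| invertible in K and with K containing enough roots of unity so that |Hom(A,K*)| = |A|. Let G be a finite group containing A as a normal subgroup, acting on K with A in the kernel of the action, and let f ∈ Z²(G,K*) satisfy f(g₁,g₂) = f(g₁,g₂a) for all a ∈ A, so that in the crossed product K^f*G one has U_{ga} = U_g U_a for all g ∈ G, a ∈ A, and K[A] embeds as the span of {U_a}. Then for every g ∈ G and character χ ∈ Hom(A,K*), conjugation satisfies U_g ι_χ U_g⁻¹ = ι_{ḡ(χ)·π_f(ḡ)}, where ι_χ = (1/|A|)Σ_{a∈A} ⟨χ,a⟩⁻¹ U_a. 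-/
/-!
Multiplying by `U_g` only moves coefficients: `U_g · s` has coefficient
`g(s(g⁻¹x)) f(g, g⁻¹x)` at `x`, and `s · U_g` has `s(xg⁻¹) f(xg⁻¹, g)`. Both sides vanish off
`gA = Ag`; on it the normalisation gives `f(g, a) = f(g, 1 · a) = f(g, 1) = 1`, and the factor
`f(xg⁻¹, g)` built into the new character cancels against the one produced by `· U_g`.
-/

section CrossedProduct

variable {K G : Type*} [Group G] [Fintype G] [DecidableEq G]

/-- The product of `K^f*G`, writing `Σ s(h) U_h` as the coefficient function `s`. -/
def crossedMul [Semiring K] [MulSemiringAction G K] (f : G → G → Kˣ) (s t : G → K) : G → K :=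
  fun x => ∑ h : G, s h * h • t (h⁻¹ * x) * (f h (h⁻¹ * x) : K)

theorem crossedMul_delta_left [Semiring K] [MulSemiringAction G K] (f : G → G → Kˣ)
    (g : G) (t : G → K) (x : G) :
    crossedMul f (fun y => if y = g then 1 else 0) t x = g • t (g⁻¹ * x) * (f g (g⁻¹ * x) : K) := by
  rw [crossedMul, Finset.sum_eq_single g (fun h _ hne => by simp [hne]) (by simp)]
  simp

theorem crossedMul_delta_right [Semiring K] [MulSemiringAction G K] (f : G → G → Kˣ)
    (g : G) (s : G → K) (x : G) :
    crossedMul f s (fun y => if y = g then 1 else 0) x = s (x * g⁻¹) * (f (x * g⁻¹) g : K) := by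
  rw [crossedMul, Finset.sum_eq_single (x * g⁻¹) (fun h _ hne => ?_) (by simp)]
  · simp
  · have : h⁻¹ * x ≠ g := fun hc => hne (by rw [← hc]; group)
    simp [this]

end CrossedProduct

theorem smul_natCast_eq {M R : Type*} [Monoid M] [Semiring R] [MulSemiringAction M R]
    (m : M) (n : ℕ) : m • (n : R) = n :=
  map_natCast (MulSemiringAction.toRingHom M R m) n

theorem eq_one_of_mem_of_right_invariant {G M : Type*} [Group G] [Monoid M] (A : Subgroup G)
    (f : G → G → M) (hone : ∀ g : G, f g 1 = 1)
    (hnorm : ∀ g₁ g₂ : G, ∀ a ∈ A, f g₁ (g₂ * a) = f g₁ g₂) (g : G) {a : G} (ha : a ∈ A) :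
    f g a = 1 := by
  simpa [hone] using hnorm g 1 a ha

/-- In the crossed product `K^f*G` (elements encoded as coefficient
functions `G → K`, with convolution product `mul`, and `U_g` encoded as the
delta function at `g`), with `A ⊴ G` in the kernel of the action, `|A|`
invertible in `K`, `|Hom(A,K*)| = |A|`, and `f` normalized so that
`U_{ga} = U_g U_a`, conjugation by `U_g` maps the idempotent
`ι_χ = |A|⁻¹ Σ_{a∈A} χ(a)⁻¹ U_a` to `ι_{ḡ(χ)·π_f(ḡ)}`, i.e.
`U_g · ι_χ = ι_{ḡ(χ)·π_f(ḡ)} · U_g`, where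
`(ḡ(χ)·π_f(ḡ))(a) = g(χ(g⁻¹ag))·f(a,g)`. -/
theorem crossed_product_idempotent_conjugation {K G : Type*} [Field K] [Group G]
    [Fintype G] [DecidableEq G] [MulSemiringAction G K]
    (A : Subgroup G) [DecidablePred (· ∈ A)] (hAn : A.Normal)
    (f : G → G → Kˣ)
    (hone : ∀ g : G, f g 1 = 1)
    (hnorm : ∀ g₁ g₂ : G, ∀ a ∈ A, f g₁ (g₂ * a) = f g₁ g₂)
    (mul : (G → K) → (G → K) → (G → K))
    (hmul : ∀ s t : G → K, ∀ x : G,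
      mul s t x = ∑ h : G, s h * h • t (h⁻¹ * x) * (f h (h⁻¹ * x) : K))
    (g : G) (χ : A →* Kˣ) :
    mul (fun x => if x = g then 1 else 0)
        (fun x => if hx : x ∈ A then (Nat.card A : K)⁻¹ * ((χ ⟨x, hx⟩ : Kˣ) : K)⁻¹ else 0)
      = mul
        (fun x => if hx : x ∈ A then (Nat.card A : K)⁻¹ *
            ((g • ((χ ⟨g⁻¹ * x * g, by simpa using hAn.conj_mem x hx g⁻¹⟩ : Kˣ) : K)) *
              (f x g : K))⁻¹
          else 0)
        (fun x => if x = g then 1 else 0) := by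
  obtain rfl : mul = crossedMul f := funext₂ fun s t => funext (hmul s t)
  funext x
  rw [crossedMul_delta_left, crossedMul_delta_right]
  by_cases hx : g⁻¹ * x ∈ A
  · have hx' : x * g⁻¹ ∈ A := hAn.mem_comm hx
    have hconj : (⟨g⁻¹ * (x * g⁻¹) * g, by simpa using hAn.conj_mem _ hx' g⁻¹⟩ : A)
        = ⟨g⁻¹ * x, hx⟩ := by
      ext; group
    rw [dif_pos hx, dif_pos hx', hconj, eq_one_of_mem_of_right_invariant A f hone hnorm g hx]
    simp only [smul_mul', smul_inv'', smul_natCast_eq, Units.val_one, mul_one, mul_inv]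
    field_simp
  · rw [dif_neg hx, dif_neg fun h => hx (hAn.mem_comm h)]
    simp
end
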